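/- Let A ∈ GL_N(ℤ_p) with entries a_{i,j}, and κ = (κ_1 ≥ ... ≥ κ_N) a weakly decreasing integer tuple. Let ℓ̃ be the largest index i with a_{i,1} a unit in ℤ_p, and let ℓ be the largest index i with κ_i = κ_{ℓ̃}. Then the singular numbers of diag(p^{κ_1},...,p^{κ_N}) · A · diag(p^{-1},1,...,1) equal κ − e_ℓ, i.e. the tuple obtained from κ by decreasing the ℓ-th entry by 1. -/

import Mathlib

open Matrix

noncomputable def pDiag (p : ℕ) [Fact p.Prime] (n m : ℕ) (lam : Fin n → ℤ) :
    Matrix (Fin n) (Fin m) ℚ_[p] :=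
  Matrix.of fun i j => if (i : ℕ) = (j : ℕ) then (p : ℚ_[p]) ^ (lam i) else 0

noncomputable def intMap {p : ℕ} [Fact p.Prime] {n m : ℕ}
    (M : Matrix (Fin n) (Fin m) ℤ_[p]) : Matrix (Fin n) (Fin m) ℚ_[p] :=
  M.map (fun x => (x : ℚ_[p]))

/-- `lam` is the tuple of singular numbers of `A`. -/
def IsSNF (p : ℕ) [Fact p.Prime] {n m : ℕ} (A : Matrix (Fin n) (Fin m) ℚ_[p])
    (lam : Fin n → ℤ) : Prop :=
  Antitone lam ∧ ∃ (U : Matrix (Fin n) (Fin n) ℤ_[p]) (V : Matrix (Fin m) (Fin m) ℤ_[p]),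
    IsUnit U ∧ IsUnit V ∧ A = intMap U * pDiag p n m lam * intMap V

open Classical in
noncomputable def pval {p : ℕ} [Fact p.Prime] (x : ℚ_[p]) : WithTop ℤ :=
  if x = 0 then ⊤ else (x.valuation : WithTop ℤ)

noncomputable def minorInf {p : ℕ} [Fact p.Prime] {n m : ℕ}
    (A : Matrix (Fin n) (Fin m) ℚ_[p]) (k : ℕ) : WithTop ℤ :=
  ⨅ (r : Fin k ↪ Fin n) (c : Fin k ↪ Fin m), pval ((A.submatrix r c).det)

/-!
Write `A = H * B` by row operations that never add a multiple of a row to a row with smaller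
`κ`: swap rows `ℓ̃` and `ℓ` (where `κ` agrees), then use the unit now in position `(ℓ, 1)` to
clear the first column in every other row `i` with `κ_i ≥ κ_ℓ`. The remaining rows lie below
`ℓ ≥ ℓ̃`, so their first-column entries are already divisible by `p`. Since `H` is block lower
triangular for `κ`, `diag(p^κ) H diag(p^{-κ})` is again in `GL_N(ℤ_p)`; since the first column of
`B` is a unit in row `ℓ` and divisible by `p` elsewhere, so is
`diag(p^{e_ℓ}) B diag(p^{-1},1,…,1)`. Then
`diag(p^κ) A diag(p^{-1},1,…,1)
  = (diag(p^κ) H diag(p^{-κ})) diag(p^{κ - e_ℓ}) (diag(p^{e_ℓ}) B diag(p^{-1},1,…,1))`.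
-/
theorem prod_zpow_eq_zpow_sum₀ {ι G : Type*} [CommGroupWithZero G] {a : G} (ha : a ≠ 0)
    (s : Finset ι) (f : ι → ℤ) : ∏ i ∈ s, a ^ f i = a ^ ∑ i ∈ s, f i := by
  classical
  induction s using Finset.induction_on with
  | empty => simp
  | insert i s hi ih => rw [Finset.prod_insert hi, Finset.sum_insert hi, ih, zpow_add₀ ha]

theorem antitone_sub_single {ι : Type*} [PartialOrder ι] [DecidableEq ι] {κ : ι → ℤ}
    (hκ : Antitone κ) {l : ι} (hl : ∀ i, l < i → κ i ≠ κ l) : Antitone (κ - Pi.single l 1) := by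
  intro i j hij
  have hκij := hκ hij
  simp only [Pi.sub_apply, Pi.single_apply]
  rcases eq_or_ne i l with rfl | hi
  · rcases eq_or_ne j i with rfl | hj
    · rfl
    · have := hl j (lt_of_le_of_ne hij hj.symm)
      rw [if_pos rfl, if_neg hj]
      omega
  · split_ifs <;> omega

section RowReduction

variable {R ι ι' α : Type*} [CommRing R] [Fintype ι] [DecidableEq ι] [Preorder α]

theorem updateCol_zero_mul_apply (l : ι) (w : ι → R) (X : Matrix ι ι' R) (i : ι) (j : ι') :
    (updateCol 0 l w * X) i j = w i * X l j := by
  simp [Matrix.mul_apply, updateCol_apply]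

theorem swap_mul_apply (i j a : ι) (b : ι') (g : Matrix ι ι' R) :
    (swap R i j * g) a b = g (Equiv.swap i j a) b := by
  simp [swap, PEquiv.toMatrix_toPEquiv_mul]

theorem exists_blockTriangular_mul_of_isUnit_apply (A : Matrix ι ι' R) (κ : ι → α)
    {l lt : ι} {j₀ : ι'} (hu : IsUnit (A lt j₀)) (hκ : κ lt = κ l) :
    ∃ (H : Matrix ι ι R) (B : Matrix ι ι' R), IsUnit H ∧
      H.BlockTriangular (OrderDual.toDual ∘ κ) ∧ A = H * B ∧
      (∀ i, i ≠ l → κ l ≤ κ i → B i j₀ = 0) ∧ (∀ i, κ i < κ l → B i j₀ = A i j₀) := by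
  set σ := Equiv.swap l lt
  have hκσ : ∀ i, κ (σ i) = κ i := by
    intro i
    rcases eq_or_ne i l with rfl | hil
    · rw [Equiv.swap_apply_left, hκ]
    rcases eq_or_ne i lt with rfl | hilt
    · rw [Equiv.swap_apply_right, hκ]
    · rw [Equiv.swap_apply_of_ne_of_ne hil hilt]
  classical
  let w : ι → R := fun i => if i ≠ l ∧ κ l ≤ κ i then A (σ i) j₀ * ↑hu.unit⁻¹ else 0
  let c : Matrix ι ι R := updateCol 0 l w
  have hc_apply : ∀ i k, c i k = if k = l then w i else 0 := by
    intro i k; simp [c, updateCol_apply]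
  have hw : w l = 0 := by simp [w]
  have hcc : c * c = 0 := by
    ext i k
    rw [updateCol_zero_mul_apply, hc_apply, hw, ite_self, mul_zero, Matrix.zero_apply]
  have hB : ∀ i, ((1 - c) * (swap R l lt * A) : Matrix ι ι' R) i j₀ =
      A (σ i) j₀ - w i * A lt j₀ := by
    intro i
    rw [Matrix.sub_mul, Matrix.one_mul, Matrix.sub_apply, updateCol_zero_mul_apply,
      swap_mul_apply, swap_mul_apply, Equiv.swap_apply_left]
  refine ⟨swap R l lt * (1 + c), (1 - c) * (swap R l lt * A), ?_, ?_, ?_, ?_, ?_⟩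
  · exact (GeneralLinearGroup.swap R l lt).isUnit.mul
      (IsNilpotent.isUnit_one_add ⟨2, by rw [sq, hcc]⟩)
  · intro i k hik
    replace hik : κ (σ i) < κ k := by simpa [hκσ] using hik
    rw [swap_mul_apply, Matrix.add_apply, one_apply_ne (ne_of_apply_ne κ hik.ne), hc_apply,
      zero_add]
    split_ifs with hk
    · subst hk
      exact if_neg fun h => hik.not_ge h.2
    · rfl
  · have hc_inv : (1 + c) * (1 - c) = 1 := by simp [mul_sub, add_mul, hcc]
    rw [Matrix.mul_assoc, ← Matrix.mul_assoc (1 + c), hc_inv, Matrix.one_mul, ← Matrix.mul_assoc,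
      swap_mul_self, Matrix.one_mul]
  · intro i hi hκi
    rw [hB, show w i = A (σ i) j₀ * ↑hu.unit⁻¹ from if_pos ⟨hi, hκi⟩, mul_assoc,
      hu.val_inv_mul, mul_one, sub_self]
  · intro i hκi
    have hwi : w i = 0 := if_neg fun h => hκi.not_ge h.2
    have hσi : σ i = i := Equiv.swap_apply_of_ne_of_ne (ne_of_apply_ne κ hκi.ne)
      (ne_of_apply_ne κ (hκ ▸ hκi.ne))
    rw [hB, hwi, hσi, zero_mul, sub_zero]

end RowReduction

section Padic

variable {p : ℕ} [Fact p.Prime] {n : ℕ}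

theorem natCast_p_ne_zero : (p : ℚ_[p]) ≠ 0 :=
  Nat.cast_ne_zero.2 (Fact.out : p.Prime).ne_zero

theorem intMap_eq_mapMatrix (M : Matrix (Fin n) (Fin n) ℤ_[p]) :
    intMap M = (PadicInt.Coe.ringHom : ℤ_[p] →+* ℚ_[p]).mapMatrix M := rfl

theorem intMap_mul (M M' : Matrix (Fin n) (Fin n) ℤ_[p]) :
    intMap (M * M') = intMap M * intMap M' := by
  simp only [intMap_eq_mapMatrix, map_mul]

theorem det_intMap (M : Matrix (Fin n) (Fin n) ℤ_[p]) : (intMap M).det = (M.det : ℚ_[p]) := by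
  rw [intMap_eq_mapMatrix, ← RingHom.map_det]
  rfl

theorem exists_intMap_eq_of_norm_le_one {m : ℕ} {M : Matrix (Fin n) (Fin m) ℚ_[p]}
    (h : ∀ i j, ‖M i j‖ ≤ 1) : ∃ Y, intMap Y = M :=
  ⟨Matrix.of fun i j => ⟨M i j, h i j⟩, rfl⟩

theorem pDiag_eq_diagonal (μ : Fin n → ℤ) :
    pDiag p n n μ = diagonal fun i => (p : ℚ_[p]) ^ μ i := by
  ext i j
  simp [pDiag, diagonal_apply, Fin.val_eq_val]

theorem pDiag_mul_pDiag (μ ν : Fin n → ℤ) :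
    pDiag p n n μ * pDiag p n n ν = pDiag p n n (μ + ν) := by
  simp only [pDiag_eq_diagonal, diagonal_mul_diagonal, Pi.add_apply, zpow_add₀ natCast_p_ne_zero]

theorem pDiag_zero : pDiag p n n 0 = 1 := by
  simp [pDiag_eq_diagonal]

theorem det_pDiag (μ : Fin n → ℤ) : (pDiag p n n μ).det = (p : ℚ_[p]) ^ ∑ i, μ i := by
  rw [pDiag_eq_diagonal, det_diagonal, prod_zpow_eq_zpow_sum₀ natCast_p_ne_zero]

theorem pDiag_mul_mul_pDiag_eq_conj_mul_mul (κ μ ν : Fin n → ℤ)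
    (H B : Matrix (Fin n) (Fin n) ℚ_[p]) :
    pDiag p n n κ * (H * B) * pDiag p n n ν =
      pDiag p n n κ * H * pDiag p n n (-κ) * pDiag p n n (κ - μ) *
        (pDiag p n n μ * B * pDiag p n n ν) := by
  have hcancel : pDiag p n n (-κ) * pDiag p n n (κ - μ) * pDiag p n n μ = 1 := by
    rw [pDiag_mul_pDiag, pDiag_mul_pDiag, show -κ + (κ - μ) + μ = 0 by abel, pDiag_zero]
  calc _ = pDiag p n n κ * H * (pDiag p n n (-κ) * pDiag p n n (κ - μ) * pDiag p n n μ) * B *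
        pDiag p n n ν := by rw [hcancel, Matrix.mul_one]; simp only [Matrix.mul_assoc]
    _ = _ := by simp only [Matrix.mul_assoc]

theorem pDiag_mul_mul_pDiag_apply {m : ℕ} (μ : Fin n → ℤ) (ν : Fin m → ℤ)
    (M : Matrix (Fin n) (Fin m) ℚ_[p]) (i : Fin n) (j : Fin m) :
    (pDiag p n n μ * M * pDiag p m m ν) i j = (p : ℚ_[p]) ^ (μ i + ν j) * M i j := by
  rw [pDiag_eq_diagonal, pDiag_eq_diagonal, mul_diagonal, diagonal_mul,
    zpow_add₀ natCast_p_ne_zero]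
  ring

theorem norm_zpow_mul_le_one (x : ℤ_[p]) {k : ℤ} (hk : 0 ≤ k) : ‖(p : ℚ_[p]) ^ k * x‖ ≤ 1 := by
  rw [norm_mul, Padic.norm_p_zpow]
  exact mul_le_one₀ (zpow_le_one_of_nonpos₀ (by exact_mod_cast (Fact.out : p.Prime).one_le)
    (neg_nonpos.2 hk)) (norm_nonneg _) x.norm_le_one

theorem exists_isUnit_intMap_eq_pDiag_mul_mul_pDiag {X : Matrix (Fin n) (Fin n) ℤ_[p]}
    (hX : IsUnit X) {μ ν : Fin n → ℤ} (hsum : ∑ i, μ i + ∑ i, ν i = 0)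
    (hle : ∀ i j, ‖(p : ℚ_[p]) ^ (μ i + ν j) * X i j‖ ≤ 1) :
    ∃ Y, IsUnit Y ∧ intMap Y = pDiag p n n μ * intMap X * pDiag p n n ν := by
  obtain ⟨Y, hY⟩ := exists_intMap_eq_of_norm_le_one
    (M := pDiag p n n μ * intMap X * pDiag p n n ν) fun i j => by
      simpa [pDiag_mul_mul_pDiag_apply, intMap] using hle i j
  refine ⟨Y, ?_, hY⟩
  have hdet : Y.det = X.det := by
    apply Subtype.coe_injective
    change (Y.det : ℚ_[p]) = X.det
    rw [← det_intMap, ← det_intMap, hY, det_mul, det_mul, det_pDiag, det_pDiag, mul_comm,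
      ← mul_assoc, ← zpow_add₀ natCast_p_ne_zero, add_comm, hsum, zpow_zero, one_mul]
  rw [isUnit_iff_isUnit_det, hdet, ← isUnit_iff_isUnit_det]
  exact hX

theorem exists_isUnit_intMap_eq_pDiag_mul_mul_pDiag_neg {X : Matrix (Fin n) (Fin n) ℤ_[p]}
    (hX : IsUnit X) {κ : Fin n → ℤ} (hκ : X.BlockTriangular (OrderDual.toDual ∘ κ)) :
    ∃ U, IsUnit U ∧ intMap U = pDiag p n n κ * intMap X * pDiag p n n (-κ) := by
  refine exists_isUnit_intMap_eq_pDiag_mul_mul_pDiag hX (by simp) fun i j => ?_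
  rcases lt_or_ge (κ i) (κ j) with hij | hij
  · rw [hκ (by simpa using hij)]
    simp
  · exact norm_zpow_mul_le_one _ (by simpa [← sub_eq_add_neg] using hij)

theorem exists_isUnit_intMap_eq_pDiag_single_mul_mul_pDiag_neg_single
    {X : Matrix (Fin n) (Fin n) ℤ_[p]} (hX : IsUnit X) (l j₀ : Fin n)
    (hdvd : ∀ i, i ≠ l → (p : ℤ_[p]) ∣ X i j₀) :
    ∃ V, IsUnit V ∧
      intMap V = pDiag p n n (Pi.single l 1) * intMap X * pDiag p n n (-Pi.single j₀ 1) := by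
  refine exists_isUnit_intMap_eq_pDiag_mul_mul_pDiag hX (by simp) fun i j => ?_
  by_cases hij : i ≠ l ∧ j = j₀
  · obtain ⟨b, hb⟩ := hdvd i hij.1
    have hexp : (Pi.single l 1 : Fin n → ℤ) i + (-Pi.single j₀ 1 : Fin n → ℤ) j = -1 := by
      simp [hij.1, hij.2]
    rw [hexp, hij.2, hb, PadicInt.coe_mul, PadicInt.coe_natCast, _root_.zpow_neg_one,
      inv_mul_cancel_left₀ natCast_p_ne_zero]
    exact b.norm_le_one
  · refine norm_zpow_mul_le_one _ ?_
    rw [not_and_or, not_not] at hij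
    rcases hij with rfl | hj
    · simp only [Pi.single_apply, Pi.neg_apply]
      split_ifs <;> omega
    · simp only [Pi.single_apply, Pi.neg_apply, if_neg hj]
      split_ifs <;> omega

end Padic

/-- Key lemma: multiplying `diag(p^κ) A diag(p^{-1},1,...,1)` for `A ∈ GL_N(ℤ_p)`
decreases by one the κ-entry at the last index `ℓ` of the block of the value
`κ_{ℓ̃}`, where `ℓ̃` is the largest row index whose first-column entry is a unit. -/
theorem sn_one_jump (p N : ℕ) [Fact p.Prime]
    (A : Matrix (Fin N) (Fin N) ℤ_[p]) (hA : IsUnit A)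
    (kappa : Fin N → ℤ) (hkappa : Antitone kappa)
    (lt : Fin N) (h0 : ∀ (hN : 0 < N), IsUnit (A lt ⟨0, hN⟩))
    (h1 : ∀ i, lt < i → ∀ (hN : 0 < N), ¬ IsUnit (A i ⟨0, hN⟩))
    (l : Fin N) (hl : kappa l = kappa lt) (hl' : ∀ i, l < i → kappa i ≠ kappa lt) :
    IsSNF p
      (pDiag p N N kappa * intMap A *
        pDiag p N N (fun i => if (i : ℕ) = 0 then -1 else 0))
      (fun i => kappa i - if i = l then 1 else 0) := by
  have hN : 0 < N := lt.pos
  set j₀ : Fin N := ⟨0, hN⟩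
  have hlt_le : lt ≤ l := le_of_not_gt fun h => hl' lt h rfl
  obtain ⟨H, B, hH, hHκ, rfl, hB_clear, hB_tail⟩ :=
    exists_blockTriangular_mul_of_isUnit_apply A kappa (h0 hN) hl.symm
  have hB : IsUnit B := isUnit_of_mul_isUnit_right hA
  have hdvd : ∀ i, i ≠ l → (p : ℤ_[p]) ∣ B i j₀ := by
    intro i hi
    rcases le_or_gt (kappa l) (kappa i) with hκi | hκi
    · rw [hB_clear i hi hκi]
      exact dvd_zero _
    · have hli : l < i := lt_of_not_ge fun h => hκi.not_ge (hkappa h)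
      rw [hB_tail i hκi, ← PadicInt.norm_lt_one_iff_dvd, ← PadicInt.not_isUnit_iff]
      exact h1 i (hlt_le.trans_lt hli) hN
  obtain ⟨U, hU, hU_eq⟩ := exists_isUnit_intMap_eq_pDiag_mul_mul_pDiag_neg hH hHκ
  obtain ⟨V, hV, hV_eq⟩ :=
    exists_isUnit_intMap_eq_pDiag_single_mul_mul_pDiag_neg_single hB l j₀ hdvd
  have hμ : (fun i => kappa i - if i = l then 1 else 0) = kappa - Pi.single l 1 := by
    ext i; simp [Pi.single_apply]
  have hν : (fun i : Fin N => if (i : ℕ) = 0 then -1 else 0) = -Pi.single j₀ 1 := by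
    ext i
    simp only [Pi.neg_apply, Pi.single_apply, j₀, Fin.ext_iff]
    split_ifs <;> simp
  rw [hμ, hν]
  refine ⟨antitone_sub_single hkappa fun i hi => hl ▸ hl' i hi, U, V, hU, hV, ?_⟩
  rw [hU_eq, hV_eq, intMap_mul, pDiag_mul_mul_pDiag_eq_conj_mul_mul]
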